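/- arXiv:2007.06159 — 4 statements merged into one kernel-verified Lean document; each statement's English description precedes it below -/
import Mathlib

section
/- For every integer L ≥ 0, the quantity H_L := E_{ξ_0,…,ξ_L iid ∼ μ} [ ∫ f(ξ_0, a) · log( (1/(L+1)) ∑_{ℓ=0}^{L} f(ξ_ℓ, a) ) dν(a) ] satisfies H_L ≥ H_{L+1} ≥ H, where H := ∫ π(a) log π(a) dν(a) is the negative differential entropy of the marginal density π. In other words, (H_L)_{L≥0} is a nonincreasing sequence of upper bounds on the negative entropy of the semi-implicit marginal. -/
open MeasureTheory Filter

/-- The uniform mixture density over `L+1` components. -/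
noncomputable def mixDensity {Ξ A : Type*} (f : Ξ → A → ℝ) {L : ℕ}
    (ξs : Fin (L + 1) → Ξ) (a : A) : ℝ :=
  (1 / (L + 1 : ℝ)) * ∑ ℓ, f (ξs ℓ) a

/-- `H_L`: the semi-implicit entropy surrogate with `L+1` iid mixing variables. -/
noncomputable def semiImplicitH {Ξ A : Type*} [MeasurableSpace Ξ] [MeasurableSpace A]
    (μ : Measure Ξ) (ν : Measure A) (f : Ξ → A → ℝ) (L : ℕ) : ℝ :=
  ∫ ξs : Fin (L + 1) → Ξ,
    (∫ a, f (ξs 0) a * Real.log (mixDensity f ξs a) ∂ν) ∂(Measure.pi fun _ => μ)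

set_option linter.unusedSectionVars false

section aux
variable {Ξ A : Type*} [MeasurableSpace Ξ] [MeasurableSpace A]

variable {Ξ A : Type*} [MeasurableSpace Ξ] [MeasurableSpace A]

lemma mp_integral_comp {α β : Type*} [MeasurableSpace α] [MeasurableSpace β]
    {μ : Measure α} {ν : Measure β} {T : α → β} (h : MeasurePreserving T μ ν)
    {g : β → ℝ} (hg : AEStronglyMeasurable g ν) :
    ∫ x, g (T x) ∂μ = ∫ y, g y ∂ν := by
  rw [← h.map_eq] at hg ⊢
  exact (integral_map h.measurable.aemeasurable hg).symm

lemma mix_nonneg {f : Ξ → A → ℝ} (hf : ∀ ξ a, 0 ≤ f ξ a) {L : ℕ} (ξs : Fin (L+1) → Ξ) (a : A) :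
    0 ≤ mixDensity f ξs a :=
  mul_nonneg (by positivity) (Finset.sum_nonneg fun ℓ _ => hf _ _)

lemma mix_meas {f : Ξ → A → ℝ} (hf : Measurable (Function.uncurry f)) {L : ℕ} :
    Measurable (fun q : (Fin (L+1) → Ξ) × A => mixDensity f q.1 q.2) := by
  unfold mixDensity
  refine measurable_const.mul (Finset.measurable_sum _ fun ℓ _ => ?_)
  have : (fun q : (Fin (L+1) → Ξ) × A => f (q.1 ℓ) q.2)
      = Function.uncurry f ∘ (fun q => (q.1 ℓ, q.2)) := rfl
  rw [this]
  exact hf.comp (((measurable_pi_apply ℓ).comp measurable_fst).prodMk measurable_snd)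

lemma mp_comp_perm (μ : Measure Ξ) [IsProbabilityMeasure μ] {n : ℕ} (σ : Equiv.Perm (Fin n)) :
    MeasurePreserving (fun ξs : Fin n → Ξ => ξs ∘ σ)
      (Measure.pi fun _ => μ) (Measure.pi fun _ => μ) := by
  have h := measurePreserving_arrowCongr' (fun _ : Fin n => μ) (fun _ : Fin n => μ)
    σ.symm (MeasurableEquiv.refl Ξ) (fun _ => MeasurePreserving.id μ)
  convert h using 1
  rfl

lemma mp_comp_succAbove (μ : Measure Ξ) [IsProbabilityMeasure μ] {n : ℕ} (k : Fin (n+1)) :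
    MeasurePreserving (fun ξs : Fin (n+1) → Ξ => ξs ∘ k.succAbove)
      (Measure.pi fun _ : Fin (n+1) => μ) (Measure.pi fun _ : Fin n => μ) := by
  have h1 := measurePreserving_piFinSuccAbove (fun _ : Fin (n+1) => μ) k
  have h2 : MeasurePreserving (Prod.snd)
      (μ.prod (Measure.pi fun _ : Fin n => μ)) (Measure.pi fun _ : Fin n => μ) :=
    ⟨measurable_snd, by rw [Measure.map_snd_prod]; simp⟩
  have h3 := h2.comp h1
  convert h3 using 1
  rfl

lemma mp_eval (μ : Measure Ξ) [IsProbabilityMeasure μ] {n : ℕ} (k : Fin (n+1)) :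
    MeasurePreserving (fun ξs : Fin (n+1) → Ξ => ξs k)
      (Measure.pi fun _ : Fin (n+1) => μ) μ := by
  have h1 := measurePreserving_piFinSuccAbove (fun _ : Fin (n+1) => μ) k
  have h2 : MeasurePreserving (Prod.fst)
      (μ.prod (Measure.pi fun _ : Fin n => μ)) μ :=
    ⟨measurable_fst, by rw [Measure.map_fst_prod]; simp⟩
  have h3 := h2.comp h1
  convert h3 using 1
  rfl

lemma mix_comp_perm (f : Ξ → A → ℝ) {n : ℕ} (σ : Equiv.Perm (Fin (n+1))) (ξs : Fin (n+1) → Ξ)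
    (a : A) : mixDensity f (ξs ∘ σ) a = mixDensity f ξs a := by
  unfold mixDensity
  congr 1
  simpa using Equiv.sum_comp σ (fun ℓ => f (ξs ℓ) a)

lemma mix_succ (f : Ξ → A → ℝ) {L : ℕ} (ξs : Fin (L+2) → Ξ) (a : A) :
    mixDensity f ξs a
      = (1 / ((L:ℝ)+2)) * ∑ k : Fin (L+2), mixDensity f (ξs ∘ k.succAbove) a := by
  unfold mixDensity
  have h1 : ∀ k : Fin (L+2), ∑ j, f ((ξs ∘ k.succAbove) j) a
      = (∑ i, f (ξs i) a) - f (ξs k) a := by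
    intro k
    have := Fin.sum_univ_succAbove (fun i => f (ξs i) a) k
    simp only [Function.comp_apply]
    linarith
  simp only [h1]
  rw [← Finset.mul_sum, Finset.sum_sub_distrib, Finset.sum_const, Finset.card_univ,
    Fintype.card_fin, nsmul_eq_mul]
  have hL1 : (L:ℝ)+1 ≠ 0 := by positivity
  have hL2 : (L:ℝ)+2 ≠ 0 := by positivity
  push_cast
  field_simp
  ring

lemma repr_lemma {μ : Measure Ξ} [IsProbabilityMeasure μ] {ν : Measure A} [SigmaFinite ν]
    {f : Ξ → A → ℝ} (hf_nonneg : ∀ ξ a, 0 ≤ f ξ a) (hf_meas : Measurable (Function.uncurry f))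
    (L : ℕ)
    (hH : Integrable (fun q : (Fin (L + 1) → Ξ) × A =>
        f (q.1 0) q.2 * |Real.log (mixDensity f q.1 q.2)|) ((Measure.pi fun _ => μ).prod ν)) :
    Integrable (fun q : (Fin (L + 1) → Ξ) × A =>
        mixDensity f q.1 q.2 * Real.log (mixDensity f q.1 q.2))
      ((Measure.pi fun _ => μ).prod ν)
    ∧ semiImplicitH μ ν f L = ∫ q : (Fin (L + 1) → Ξ) × A,
        mixDensity f q.1 q.2 * Real.log (mixDensity f q.1 q.2)
        ∂((Measure.pi fun _ => μ).prod ν) := by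
  set P : Measure (Fin (L+1) → Ξ) := Measure.pi fun _ => μ with hP
  have hmeas_coord : ∀ ℓ : Fin (L+1),
      Measurable (fun q : (Fin (L+1) → Ξ) × A => f (q.1 ℓ) q.2) := by
    intro ℓ
    have : (fun q : (Fin (L+1) → Ξ) × A => f (q.1 ℓ) q.2)
        = Function.uncurry f ∘ (fun q => (q.1 ℓ, q.2)) := rfl
    rw [this]
    exact hf_meas.comp (((measurable_pi_apply ℓ).comp measurable_fst).prodMk measurable_snd)
  have hlog : Measurable (fun q : (Fin (L+1) → Ξ) × A => Real.log (mixDensity f q.1 q.2)) :=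
    Real.measurable_log.comp (mix_meas hf_meas)
  set g : Fin (L+1) → ((Fin (L+1) → Ξ) × A) → ℝ :=
    fun ℓ q => f (q.1 ℓ) q.2 * Real.log (mixDensity f q.1 q.2) with hg
  have hgmeas : ∀ ℓ, Measurable (g ℓ) := fun ℓ => (hmeas_coord ℓ).mul hlog
  have hg0_int : Integrable (g 0) (P.prod ν) := by
    refine hH.mono' (hgmeas 0).aestronglyMeasurable (Eventually.of_forall fun q => ?_)
    rw [Real.norm_eq_abs, hg, abs_mul, abs_of_nonneg (hf_nonneg _ _)]
  have hgl : ∀ ℓ : Fin (L+1), Integrable (g ℓ) (P.prod ν) ∧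
      ∫ q, g ℓ q ∂(P.prod ν) = ∫ q, g 0 q ∂(P.prod ν) := by
    intro ℓ
    set σ := Equiv.swap (0 : Fin (L+1)) ℓ with hσ
    have hT : MeasurePreserving
        (fun q : (Fin (L+1) → Ξ) × A => (q.1 ∘ σ, q.2)) (P.prod ν) (P.prod ν) :=
      (mp_comp_perm μ σ).prod (MeasurePreserving.id ν)
    have hcomp : ∀ q : (Fin (L+1) → Ξ) × A, g 0 (q.1 ∘ σ, q.2) = g ℓ q := by
      intro q
      simp only [hg]
      rw [mix_comp_perm]
      simp [hσ, Equiv.swap_apply_left]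
    constructor
    · have := (hT.integrable_comp (hgmeas 0).aestronglyMeasurable).2 hg0_int
      refine this.congr (Eventually.of_forall fun q => ?_)
      exact hcomp q
    · have := mp_integral_comp hT (hgmeas 0).aestronglyMeasurable
      rw [← this]
      exact integral_congr_ae (Eventually.of_forall fun q => (hcomp q).symm)
  have hFeq : (fun q : (Fin (L+1) → Ξ) × A =>
      mixDensity f q.1 q.2 * Real.log (mixDensity f q.1 q.2))
      = fun q => (1/((L:ℝ)+1)) * ∑ ℓ, g ℓ q := by
    funext q
    show mixDensity f q.1 q.2 * Real.log (mixDensity f q.1 q.2) = _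
    rw [mixDensity, mul_assoc, Finset.sum_mul]
    push_cast
    rfl
  have hFint : Integrable (fun q : (Fin (L+1) → Ξ) × A =>
      mixDensity f q.1 q.2 * Real.log (mixDensity f q.1 q.2)) (P.prod ν) := by
    rw [hFeq]
    exact (integrable_finset_sum _ fun ℓ _ => (hgl ℓ).1).const_mul _
  refine ⟨hFint, ?_⟩
  have hsemi : semiImplicitH μ ν f L = ∫ q, g 0 q ∂(P.prod ν) := by
    rw [semiImplicitH]
    exact integral_integral hg0_int
  rw [hsemi, hFeq, integral_const_mul _, integral_finset_sum _ fun ℓ _ => (hgl ℓ).1]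
  have : ∀ ℓ ∈ (Finset.univ : Finset (Fin (L+1))), ∫ q, g ℓ q ∂(P.prod ν)
      = ∫ q, g 0 q ∂(P.prod ν) := fun ℓ _ => (hgl ℓ).2
  rw [Finset.sum_congr rfl this, Finset.sum_const, Finset.card_univ, Fintype.card_fin,
    nsmul_eq_mul]
  have hL1 : ((L:ℝ)+1) ≠ 0 := by positivity
  push_cast
  field_simp

end aux

/-- `(H_L)` is a nonincreasing sequence of upper bounds on the negative
entropy `H = ∫ π log π dν` of the semi-implicit marginal `π`. -/
theorem semiImplicitH_antitone_and_ge_negEntropy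
    {Ξ A : Type*} [MeasurableSpace Ξ] [MeasurableSpace A]
    (μ : Measure Ξ) [IsProbabilityMeasure μ]
    (ν : Measure A) [SigmaFinite ν]
    (f : Ξ → A → ℝ)
    (hf_nonneg : ∀ ξ a, 0 ≤ f ξ a)
    (hf_meas : Measurable (Function.uncurry f))
    (hf_dens : ∀ᵐ ξ ∂μ, ∫ a, f ξ a ∂ν = 1)
    (π : A → ℝ) (hπ : ∀ a, π a = ∫ ξ, f ξ a ∂μ)
    (hπ_int : Integrable (fun a => π a * |Real.log (π a)|) ν)
    (hH_int : ∀ L : ℕ, Integrable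
      (fun q : (Fin (L + 1) → Ξ) × A =>
        f (q.1 0) q.2 * |Real.log (mixDensity f q.1 q.2)|)
      ((Measure.pi fun _ => μ).prod ν)) :
    ∀ L : ℕ,
      semiImplicitH μ ν f (L + 1) ≤ semiImplicitH μ ν f L ∧
      (∫ a, π a * Real.log (π a) ∂ν) ≤ semiImplicitH μ ν f (L + 1) := by
  intro L
  obtain ⟨hInt0, hRepr0⟩ := repr_lemma hf_nonneg hf_meas L (hH_int L)
  obtain ⟨hInt1, hRepr1⟩ := repr_lemma hf_nonneg hf_meas (L+1) (hH_int (L+1))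
  set P : Measure (Fin (L+1) → Ξ) := Measure.pi fun _ => μ with hPdef
  set P' : Measure (Fin (L+2) → Ξ) := Measure.pi fun _ => μ with hP'def
  have hL2 : ((L:ℝ)+2) ≠ 0 := by positivity
  have hFmeas : Measurable (fun q : (Fin (L+1) → Ξ) × A =>
      mixDensity f q.1 q.2 * Real.log (mixDensity f q.1 q.2)) :=
    (mix_meas hf_meas).mul (Real.measurable_log.comp (mix_meas hf_meas))
  have hterm : ∀ k : Fin (L+2),
      Integrable (fun q : (Fin (L+2) → Ξ) × A =>
        mixDensity f (q.1 ∘ k.succAbove) q.2 * Real.log (mixDensity f (q.1 ∘ k.succAbove) q.2))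
        (P'.prod ν)
      ∧ (∫ q : (Fin (L+2) → Ξ) × A,
          mixDensity f (q.1 ∘ k.succAbove) q.2 * Real.log (mixDensity f (q.1 ∘ k.succAbove) q.2)
          ∂(P'.prod ν))
        = ∫ q : (Fin (L+1) → Ξ) × A,
            mixDensity f q.1 q.2 * Real.log (mixDensity f q.1 q.2) ∂(P.prod ν) := by
    intro k
    have hT : MeasurePreserving (fun q : (Fin (L+2) → Ξ) × A => (q.1 ∘ k.succAbove, q.2))
        (P'.prod ν) (P.prod ν) :=
      (mp_comp_succAbove μ k).prod (MeasurePreserving.id ν)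
    exact ⟨(hT.integrable_comp hFmeas.aestronglyMeasurable).2 hInt0,
      mp_integral_comp hT hFmeas.aestronglyMeasurable⟩
  constructor
  · -- monotonicity
    rw [hRepr1, hRepr0]
    have hpt : ∀ q : (Fin (L+2) → Ξ) × A,
        mixDensity f q.1 q.2 * Real.log (mixDensity f q.1 q.2)
        ≤ ∑ k : Fin (L+2), (1/((L:ℝ)+2)) *
            (mixDensity f (q.1 ∘ k.succAbove) q.2
              * Real.log (mixDensity f (q.1 ∘ k.succAbove) q.2)) := by
      intro q
      have hw : ∑ _k : Fin (L+2), (1/((L:ℝ)+2)) = 1 := by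
        rw [Finset.sum_const, Finset.card_univ, Fintype.card_fin, nsmul_eq_mul]
        push_cast; field_simp
      have hj := Real.convexOn_mul_log.map_sum_le (t := Finset.univ)
        (w := fun _ : Fin (L+2) => 1/((L:ℝ)+2))
        (p := fun k => mixDensity f (q.1 ∘ k.succAbove) q.2)
        (fun _ _ => by positivity) hw (fun k _ => mix_nonneg hf_nonneg _ _)
      have hsum : ∑ k : Fin (L+2), (1/((L:ℝ)+2)) • mixDensity f (q.1 ∘ k.succAbove) q.2
          = mixDensity f q.1 q.2 := by
        simp only [smul_eq_mul]
        rw [← Finset.mul_sum, ← mix_succ]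
      rw [hsum] at hj
      simpa [smul_eq_mul] using hj
    have hsum_int : Integrable (fun q : (Fin (L+2) → Ξ) × A =>
        ∑ k : Fin (L+2), (1/((L:ℝ)+2)) *
          (mixDensity f (q.1 ∘ k.succAbove) q.2
            * Real.log (mixDensity f (q.1 ∘ k.succAbove) q.2))) (P'.prod ν) :=
      integrable_finset_sum _ fun k _ => ((hterm k).1.const_mul _)
    calc ∫ q : (Fin (L+2) → Ξ) × A,
          mixDensity f q.1 q.2 * Real.log (mixDensity f q.1 q.2) ∂(P'.prod ν)
        ≤ ∫ q : (Fin (L+2) → Ξ) × A, ∑ k : Fin (L+2), (1/((L:ℝ)+2)) *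
            (mixDensity f (q.1 ∘ k.succAbove) q.2
              * Real.log (mixDensity f (q.1 ∘ k.succAbove) q.2)) ∂(P'.prod ν) :=
          integral_mono hInt1 hsum_int hpt
      _ = ∑ k : Fin (L+2), (1/((L:ℝ)+2)) *
            (∫ q : (Fin (L+2) → Ξ) × A,
              mixDensity f (q.1 ∘ k.succAbove) q.2
                * Real.log (mixDensity f (q.1 ∘ k.succAbove) q.2) ∂(P'.prod ν)) := by
          rw [integral_finset_sum _ fun k _ => ((hterm k).1.const_mul _)]
          exact Finset.sum_congr rfl fun k _ => integral_const_mul _ _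
      _ = ∫ q : (Fin (L+1) → Ξ) × A,
            mixDensity f q.1 q.2 * Real.log (mixDensity f q.1 q.2) ∂(P.prod ν) := by
          rw [Finset.sum_congr rfl fun k _ => by rw [(hterm k).2]]
          rw [Finset.sum_const, Finset.card_univ, Fintype.card_fin, nsmul_eq_mul]
          push_cast
          field_simp
  · -- lower bound
    have hofmeas : Measurable fun p : Ξ × A => ENNReal.ofReal (f p.1 p.2) :=
      ENNReal.measurable_ofReal.comp hf_meas
    have h1 : ∀ᵐ ξ ∂μ, ∫⁻ a, ENNReal.ofReal (f ξ a) ∂ν = 1 := by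
      filter_upwards [hf_dens] with ξ hξ
      have hfi : Integrable (fun a => f ξ a) ν := by
        by_contra hni
        rw [integral_undef hni] at hξ
        norm_num at hξ
      rw [← ofReal_integral_eq_lintegral_ofReal hfi
        (Eventually.of_forall fun a => hf_nonneg ξ a), hξ]
      simp
    have h2 : ∫⁻ a, ∫⁻ ξ, ENNReal.ofReal (f ξ a) ∂μ ∂ν = 1 := by
      rw [← lintegral_lintegral_swap hofmeas.aemeasurable, lintegral_congr_ae h1]
      simp
    have h4 : ∀ᵐ a ∂ν, ∫⁻ ξ, ENNReal.ofReal (f ξ a) ∂μ < ⊤ :=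
      ae_lt_top hofmeas.lintegral_prod_left' (by rw [h2]; exact ENNReal.one_ne_top)
    have hint_a : ∀ᵐ a ∂ν, Integrable (fun ξ => f ξ a) μ := by
      filter_upwards [h4] with a ha
      have hm : (fun ξ => f ξ a) = Function.uncurry f ∘ (fun ξ => (ξ, a)) := rfl
      refine ⟨(by rw [hm]; exact
        (hf_meas.comp (measurable_id.prodMk measurable_const)) : Measurable fun ξ => f ξ a
        ).aestronglyMeasurable, ?_⟩
      rw [hasFiniteIntegral_iff_ofReal (Eventually.of_forall fun ξ => hf_nonneg ξ a)]
      exact ha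
    have hmix_fact : ∀ᵐ a ∂ν, Integrable (fun ξs : Fin (L+2) → Ξ => mixDensity f ξs a) P'
        ∧ ∫ ξs : Fin (L+2) → Ξ, mixDensity f ξs a ∂P' = π a := by
      filter_upwards [hint_a] with a ha
      have hcoord : ∀ ℓ : Fin (L+2), Integrable (fun ξs : Fin (L+2) → Ξ => f (ξs ℓ) a) P' := by
        intro ℓ
        have he : (fun ξs : Fin (L+2) → Ξ => f (ξs ℓ) a)
            = (fun ξ => f ξ a) ∘ (fun ξs : Fin (L+2) → Ξ => ξs ℓ) := rfl
        rw [he]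
        exact ((mp_eval μ ℓ).integrable_comp ha.aestronglyMeasurable).2 ha
      have hmeq : (fun ξs : Fin (L+2) → Ξ => mixDensity f ξs a)
          = fun ξs => (1/((L:ℝ)+2)) * ∑ ℓ : Fin (L+2), f (ξs ℓ) a := by
        funext ξs
        rw [mixDensity]
        push_cast
        ring
      constructor
      · rw [hmeq]
        exact (integrable_finset_sum _ fun ℓ _ => hcoord ℓ).const_mul _
      · rw [hmeq]
        rw [integral_const_mul, integral_finset_sum _ fun ℓ _ => hcoord ℓ]
        have heval : ∀ ℓ ∈ (Finset.univ : Finset (Fin (L+2))),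
            ∫ ξs : Fin (L+2) → Ξ, f (ξs ℓ) a ∂P' = π a := by
          intro ℓ _
          rw [hπ a]
          exact mp_integral_comp (mp_eval μ ℓ) ha.aestronglyMeasurable
        rw [Finset.sum_congr rfl heval, Finset.sum_const, Finset.card_univ, Fintype.card_fin,
          nsmul_eq_mul]
        push_cast
        field_simp
    have hslice := hInt1.prod_left_ae
    have hπ_nonneg : ∀ a, 0 ≤ π a := fun a => by
      rw [hπ a]; exact integral_nonneg fun ξ => hf_nonneg ξ a
    have hjensen : ∀ᵐ a ∂ν, π a * Real.log (π a)
        ≤ ∫ ξs : Fin (L+2) → Ξ, mixDensity f ξs a * Real.log (mixDensity f ξs a) ∂P' := by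
      filter_upwards [hmix_fact, hslice] with a hmf hsl
      have h := Real.convexOn_mul_log.map_integral_le (μ := P')
        Real.continuous_mul_log.continuousOn isClosed_Ici
        (Eventually.of_forall fun ξs => Set.mem_Ici.mpr (mix_nonneg hf_nonneg ξs a)) hmf.1 hsl
      rw [hmf.2] at h
      exact h
    have hInt2 : Integrable (fun a => ∫ ξs : Fin (L+2) → Ξ,
        mixDensity f ξs a * Real.log (mixDensity f ξs a) ∂P') ν := hInt1.integral_prod_right
    have hπm : AEStronglyMeasurable (fun a => π a * Real.log (π a)) ν := by
      have hsm : StronglyMeasurable (fun a => ∫ ξ, f ξ a ∂μ) :=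
        (hf_meas.stronglyMeasurable).integral_prod_left
      rw [show (fun a => π a * Real.log (π a))
          = fun a => (∫ ξ, f ξ a ∂μ) * Real.log (∫ ξ, f ξ a ∂μ) from
        funext fun a => by rw [hπ a]]
      exact (Real.continuous_mul_log.comp_stronglyMeasurable hsm).aestronglyMeasurable
    have hπφ_int : Integrable (fun a => π a * Real.log (π a)) ν :=
      hπ_int.mono' hπm (Eventually.of_forall fun a => by
        rw [Real.norm_eq_abs, abs_mul, abs_of_nonneg (hπ_nonneg a)])
    have hmain := integral_mono_ae hπφ_int hInt2 hjensen
    rw [hRepr1]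
    refine hmain.trans_eq ?_
    exact ((integral_integral_swap hInt1).symm.trans (integral_integral hInt1))
end

section
/- Expected-KL gap identity: for every integer L ≥ 0, H_L − H = E_{ξ_0,…,ξ_L iid ∼ μ} [ ∫ π̄_{ξ_{0:L}}(a) · log( π̄_{ξ_{0:L}}(a) / π(a) ) dν(a) ], i.e., the gap between H_L and the negative entropy H equals the expected Kullback–Leibler divergence from the random mixture π̄_{ξ_{0:L}} to the marginal π; consequently this gap is nonnegative and H_L ≥ H. -/
open MeasureTheory Filter
open scoped ENNReal NNReal

lemma my_measurePreserving_eval {ι : Type*} [Fintype ι] {α : Type*} [MeasurableSpace α]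
    (μ : Measure α) [IsProbabilityMeasure μ] (i : ι) :
    MeasurePreserving (Function.eval i) (Measure.pi fun _ : ι => μ) μ := by
  classical
  refine ⟨measurable_pi_apply i, ?_⟩
  ext s hs
  rw [Measure.map_apply (measurable_pi_apply i) hs, ← Set.univ_pi_update_univ,
    Measure.pi_pi]
  rw [Fintype.prod_eq_single i (fun j hj => by rw [Function.update_of_ne hj]; simp)]
  simp

lemma my_coe_piCongrLeft {ι : Type*} {α : Type*} [MeasurableSpace α] (e : Equiv.Perm ι) :
    ⇑(MeasurableEquiv.piCongrLeft (fun _ : ι => α) e.symm)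
      = fun ξs : ι → α => ξs ∘ e := by
  funext ξs
  ext i
  simp only [MeasurableEquiv.coe_piCongrLeft]
  have := Equiv.piCongrLeft_apply_apply (fun _ : ι => α) e.symm ξs (e i)
  simpa using this

lemma my_measurePreserving_perm {ι : Type*} [Fintype ι] {α : Type*} [MeasurableSpace α]
    (μ : Measure α) [SigmaFinite μ] (e : Equiv.Perm ι) :
    MeasurePreserving (fun ξs : ι → α => ξs ∘ e) (Measure.pi fun _ : ι => μ)
      (Measure.pi fun _ : ι => μ) := by
  have h := MeasureTheory.measurePreserving_piCongrLeft (fun _ : ι => μ) e.symm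
  rw [my_coe_piCongrLeft] at h
  exact h



/-- expected-KL gap identity.  `H_L − H` equals the expected
Kullback–Leibler divergence from the random mixture `π̄_{ξ_{0:L}}` to the
marginal `π`; consequently the gap is nonnegative, i.e. `H_L ≥ H`. -/
theorem semiImplicitH_sub_negEntropy_eq_expected_KL
    {Ξ A : Type*} [MeasurableSpace Ξ] [MeasurableSpace A]
    (μ : Measure Ξ) [IsProbabilityMeasure μ]
    (ν : Measure A) [SigmaFinite ν]
    (f : Ξ → A → ℝ)
    (hf_nonneg : ∀ ξ a, 0 ≤ f ξ a)
    (hf_meas : Measurable (Function.uncurry f))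
    (hf_dens : ∀ᵐ ξ ∂μ, ∫ a, f ξ a ∂ν = 1)
    (π : A → ℝ) (hπ : ∀ a, π a = ∫ ξ, f ξ a ∂μ)
    (hπ_int : Integrable (fun a => π a * |Real.log (π a)|) ν)
    (hH_int : ∀ L : ℕ, Integrable
      (fun q : (Fin (L + 1) → Ξ) × A =>
        f (q.1 0) q.2 * |Real.log (mixDensity f q.1 q.2)|)
      ((Measure.pi fun _ => μ).prod ν))
    (hKL_int : ∀ L : ℕ, Integrable
      (fun q : (Fin (L + 1) → Ξ) × A =>
        mixDensity f q.1 q.2 * |Real.log (mixDensity f q.1 q.2 / π q.2)|)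
      ((Measure.pi fun _ => μ).prod ν)) :
    ∀ L : ℕ,
      semiImplicitH μ ν f L - (∫ a, π a * Real.log (π a) ∂ν) =
        (∫ ξs : Fin (L + 1) → Ξ,
          (∫ a, mixDensity f ξs a * Real.log (mixDensity f ξs a / π a) ∂ν)
          ∂(Measure.pi fun _ => μ)) ∧
      (∫ a, π a * Real.log (π a) ∂ν) ≤ semiImplicitH μ ν f L := by
  classical
  intro L
  set Pm : Measure (Fin (L + 1) → Ξ) := Measure.pi fun _ => μ with hPmdef
  set P : Measure ((Fin (L + 1) → Ξ) × A) := Pm.prod ν with hPdef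
  -- basic measurability and positivity
  have hfq_meas : ∀ ℓ : Fin (L + 1),
      Measurable (fun q : (Fin (L + 1) → Ξ) × A => f (q.1 ℓ) q.2) := fun ℓ => by
    have := hf_meas.comp
      ((((measurable_pi_apply ℓ).comp measurable_fst).prodMk measurable_snd) :
        Measurable fun q : (Fin (L + 1) → Ξ) × A => (q.1 ℓ, q.2))
    exact this
  have hmix_meas : Measurable (fun q : (Fin (L + 1) → Ξ) × A => mixDensity f q.1 q.2) := by
    unfold mixDensity
    exact measurable_const.mul (Finset.measurable_sum _ fun ℓ _ => hfq_meas ℓ)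
  have hmix_nonneg : ∀ (ξs : Fin (L + 1) → Ξ) (a : A), 0 ≤ mixDensity f ξs a := fun ξs a =>
    mul_nonneg (by positivity) (Finset.sum_nonneg fun ℓ _ => hf_nonneg _ _)
  have hπ_meas : Measurable π := by
    have h1 : Measurable (Function.uncurry fun a ξ => f ξ a) :=
      hf_meas.comp measurable_swap
    have h2 : StronglyMeasurable (fun a => ∫ ξ, f ξ a ∂μ) :=
      h1.stronglyMeasurable.integral_prod_right'
    have : π = fun a => ∫ ξ, f ξ a ∂μ := funext hπ
    rw [this]; exact h2.measurable
  have hπ_nonneg : ∀ a, 0 ≤ π a := fun a => by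
    rw [hπ]; exact integral_nonneg fun ξ => hf_nonneg ξ a
  have hev : ∀ ℓ : Fin (L + 1),
      MeasurePreserving (Function.eval ℓ : (Fin (L + 1) → Ξ) → Ξ) Pm μ :=
    fun ℓ => my_measurePreserving_eval μ ℓ
  -- a.e. all coordinates are densities
  have hdens_all : ∀ᵐ ξs ∂Pm, ∀ ℓ, ∫ a, f (ξs ℓ) a ∂ν = 1 := by
    rw [ae_all_iff]
    intro ℓ
    exact ae_of_ae_map (hev ℓ).measurable.aemeasurable (by rw [(hev ℓ).map_eq]; exact hf_dens)
  have hint_of_one : ∀ ξ : Ξ, (∫ a, f ξ a ∂ν = 1) → Integrable (f ξ) ν := by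
    intro ξ h
    by_contra hni
    rw [integral_undef hni] at h
    norm_num at h
  -- a.e. the mixture is a probability density
  have hmix_dens : ∀ᵐ ξs ∂Pm,
      Integrable (fun a => mixDensity f ξs a) ν ∧ ∫ a, mixDensity f ξs a ∂ν = 1 := by
    filter_upwards [hdens_all] with ξs hξs
    have hint : ∀ ℓ : Fin (L + 1), Integrable (f (ξs ℓ)) ν := fun ℓ =>
      hint_of_one _ (hξs ℓ)
    have hintsum : Integrable (fun a => ∑ ℓ, f (ξs ℓ) a) ν :=
      integrable_finset_sum _ fun ℓ _ => hint ℓ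
    have hintmix : Integrable (fun a => mixDensity f ξs a) ν := by
      unfold mixDensity; exact hintsum.const_mul _
    refine ⟨hintmix, ?_⟩
    unfold mixDensity
    rw [integral_const_mul, integral_finset_sum _ fun ℓ _ => hint ℓ]
    simp only [hξs]
    rw [Finset.sum_const]
    simp
    field_simp
  -- lintegral representations
  have hf_lint : ∀ᵐ ξ ∂μ, ∫⁻ a, ENNReal.ofReal (f ξ a) ∂ν = 1 := by
    filter_upwards [hf_dens] with ξ hξ
    rw [← ofReal_integral_eq_lintegral_ofReal (hint_of_one ξ hξ)
      (ae_of_all _ fun a => hf_nonneg ξ a), hξ]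
    simp
  have hfa_meas : ∀ a, Measurable (fun ξ => f ξ a) := fun a =>
    hf_meas.comp (measurable_id.prodMk measurable_const)
  have hπ_repr : ∀ a, π a = (∫⁻ ξ, ENNReal.ofReal (f ξ a) ∂μ).toReal := by
    intro a
    rw [hπ, integral_eq_lintegral_of_nonneg_ae (ae_of_all _ fun ξ => hf_nonneg ξ a)
      (hfa_meas a).aestronglyMeasurable]
  have hswap : ∫⁻ a, ∫⁻ ξ, ENNReal.ofReal (f ξ a) ∂μ ∂ν = 1 := by
    rw [← lintegral_lintegral_swap]
    · rw [lintegral_congr_ae hf_lint]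
      simp
    · exact (ENNReal.measurable_ofReal.comp hf_meas).aemeasurable
  have hmarg_meas : Measurable (fun a => ∫⁻ ξ, ENNReal.ofReal (f ξ a) ∂μ) :=
    Measurable.lintegral_prod_left (ENNReal.measurable_ofReal.comp hf_meas)
  have hfin : ∀ᵐ a ∂ν, ∫⁻ ξ, ENNReal.ofReal (f ξ a) ∂μ < ⊤ :=
    ae_lt_top hmarg_meas (by rw [hswap]; exact ENNReal.one_ne_top)
  have hL1 : ((L : ℝ) + 1) ≠ 0 := by positivity
  -- lintegral of the mixture in ξs equals lintegral of f in ξ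
  have hmix_lint : ∀ a, ∫⁻ ξs, ENNReal.ofReal (mixDensity f ξs a) ∂Pm
      = ∫⁻ ξ, ENNReal.ofReal (f ξ a) ∂μ := by
    intro a
    have h1 : ∀ ξs : Fin (L + 1) → Ξ, ENNReal.ofReal (mixDensity f ξs a)
        = ENNReal.ofReal (1 / (L + 1 : ℝ)) * ∑ ℓ, ENNReal.ofReal (f (ξs ℓ) a) := by
      intro ξs
      unfold mixDensity
      rw [ENNReal.ofReal_mul (by positivity), ENNReal.ofReal_sum_of_nonneg
        (fun ℓ _ => hf_nonneg _ _)]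
    simp only [h1]
    have hterm_meas : ∀ ℓ : Fin (L + 1),
        Measurable (fun ξs : Fin (L + 1) → Ξ => ENNReal.ofReal (f (ξs ℓ) a)) := by
      intro ℓ
      exact ENNReal.measurable_ofReal.comp ((hfa_meas a).comp (measurable_pi_apply ℓ))
    have hsum_meas : Measurable (fun ξs : Fin (L + 1) → Ξ =>
        ∑ ℓ, ENNReal.ofReal (f (ξs ℓ) a)) :=
      Finset.measurable_sum _ fun ℓ _ => hterm_meas ℓ
    rw [lintegral_const_mul _ hsum_meas,
      lintegral_finset_sum _ fun ℓ _ => hterm_meas ℓ]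
    have h2 : ∀ ℓ : Fin (L + 1), ∫⁻ ξs, ENNReal.ofReal (f (ξs ℓ) a) ∂Pm
        = ∫⁻ ξ, ENNReal.ofReal (f ξ a) ∂μ := fun ℓ =>
      (hev ℓ).lintegral_comp (ENNReal.measurable_ofReal.comp (hfa_meas a))
    simp only [h2, Finset.sum_const, Finset.card_univ, Fintype.card_fin, nsmul_eq_mul]
    rw [← mul_assoc]
    have h3 : ENNReal.ofReal (1 / (L + 1 : ℝ)) * ((L : ℝ≥0∞) + 1) = 1 := by
      have : ((L : ℝ≥0∞) + 1) = ENNReal.ofReal ((L : ℝ) + 1) := by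
        rw [ENNReal.ofReal_add (by positivity) zero_le_one]
        simp [ENNReal.ofReal_natCast]
      rw [this, ← ENNReal.ofReal_mul (by positivity)]
      rw [one_div, inv_mul_cancel₀ hL1]
      simp
    have h4 : ((L + 1 : ℕ) : ℝ≥0∞) = (L : ℝ≥0∞) + 1 := by push_cast; ring
    rw [h4, h3, one_mul]
  -- the Bochner marginal of the mixture is π
  have hmixa_meas : ∀ a, Measurable (fun ξs : Fin (L + 1) → Ξ => mixDensity f ξs a) :=
    fun a => hmix_meas.comp (measurable_id.prodMk measurable_const)
  have hmix_marg : ∀ a, ∫ ξs, mixDensity f ξs a ∂Pm = π a := by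
    intro a
    rw [integral_eq_lintegral_of_nonneg_ae (ae_of_all _ fun ξs => hmix_nonneg ξs a)
      (hmixa_meas a).aestronglyMeasurable, hmix_lint a, ← hπ_repr a]
  -- π is a probability density
  have hπ_lint : ∫⁻ a, ENNReal.ofReal (π a) ∂ν = 1 := by
    have : ∀ᵐ a ∂ν, ENNReal.ofReal (π a) = ∫⁻ ξ, ENNReal.ofReal (f ξ a) ∂μ := by
      filter_upwards [hfin] with a ha
      rw [hπ_repr a, ENNReal.ofReal_toReal ha.ne]
    rw [lintegral_congr_ae this, hswap]
  have hπ_int1 : Integrable π ν := by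
    refine ⟨hπ_meas.aestronglyMeasurable, ?_⟩
    rw [hasFiniteIntegral_iff_ofReal (ae_of_all _ hπ_nonneg), hπ_lint]
    exact ENNReal.one_lt_top
  have hπ_total : ∫ a, π a ∂ν = 1 := by
    rw [integral_eq_lintegral_of_nonneg_ae (ae_of_all _ hπ_nonneg)
      hπ_meas.aestronglyMeasurable, hπ_lint]
    simp
  -- the family of functions F ℓ
  set F : Fin (L + 1) → ((Fin (L + 1) → Ξ) × A) → ℝ :=
    fun ℓ q => f (q.1 ℓ) q.2 * Real.log (mixDensity f q.1 q.2) with hFdef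
  have hF_meas : ∀ ℓ, Measurable (F ℓ) := fun ℓ =>
    (hfq_meas ℓ).mul (Real.measurable_log.comp hmix_meas)
  have hF0_int : Integrable (F 0) P := by
    refine (hH_int L).mono (hF_meas 0).aestronglyMeasurable (ae_of_all _ fun q => ?_)
    rw [Real.norm_eq_abs, Real.norm_eq_abs, abs_mul, abs_mul,
      abs_of_nonneg (hf_nonneg _ _), abs_abs]
  -- symmetry: every F ℓ has the same integral as F 0
  have hkey : ∀ ℓ : Fin (L + 1), Integrable (F ℓ) P ∧ ∫ q, F ℓ q ∂P = ∫ q, F 0 q ∂P := by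
    intro ℓ
    set e : Equiv.Perm (Fin (L + 1)) := Equiv.swap 0 ℓ with hedef
    have hT : MeasurePreserving (fun ξs : Fin (L + 1) → Ξ => ξs ∘ e) Pm Pm :=
      my_measurePreserving_perm μ e
    have hTemb : MeasurableEmbedding (fun ξs : Fin (L + 1) → Ξ => ξs ∘ e) := by
      rw [← my_coe_piCongrLeft e]
      exact (MeasurableEquiv.piCongrLeft (fun _ : Fin (L + 1) => Ξ) e.symm).measurableEmbedding
    have hS : MeasurePreserving
        (Prod.map (fun ξs : Fin (L + 1) → Ξ => ξs ∘ e) (id : A → A)) P P :=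
      hT.prod (MeasurePreserving.id ν)
    have hSemb : MeasurableEmbedding
        (Prod.map (fun ξs : Fin (L + 1) → Ξ => ξs ∘ e) (id : A → A)) :=
      hTemb.prodMap MeasurableEmbedding.id
    have hmixinv : ∀ (ξs : Fin (L + 1) → Ξ) (a : A),
        mixDensity f (ξs ∘ e) a = mixDensity f ξs a := by
      intro ξs a
      unfold mixDensity
      congr 1
      exact Equiv.sum_comp e (fun i => f (ξs i) a)
    have hcomp : (fun q => F 0 (Prod.map (fun ξs : Fin (L + 1) → Ξ => ξs ∘ e) id q))
        = F ℓ := by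
      funext q
      simp only [hFdef, Prod.map, id]
      rw [hmixinv]
      have : (q.1 ∘ e) 0 = q.1 ℓ := by
        simp [hedef, Function.comp, Equiv.swap_apply_left]
      rw [this]
    constructor
    · have := (hS.integrable_comp_emb hSemb).mpr hF0_int
      rwa [show (F 0 ∘ Prod.map (fun ξs : Fin (L + 1) → Ξ => ξs ∘ e) id) = F ℓ from hcomp]
        at this
    · rw [← hS.integral_comp hSemb (F 0)]
      exact congrArg (fun g => ∫ q, g q ∂P) hcomp |>.symm ▸ (by rw [← hcomp])
  -- M = mix * log mix
  set M : ((Fin (L + 1) → Ξ) × A) → ℝ :=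
    fun q => mixDensity f q.1 q.2 * Real.log (mixDensity f q.1 q.2) with hMdef
  have hMrepr : M = fun q => (1 / (L + 1 : ℝ)) * ∑ ℓ, F ℓ q := by
    funext q
    simp only [hMdef, hFdef]
    rw [← Finset.sum_mul]
    show mixDensity f q.1 q.2 * Real.log (mixDensity f q.1 q.2) = _
    unfold mixDensity
    ring
  have hM_int : Integrable M P := by
    rw [hMrepr]
    exact (integrable_finset_sum _ fun ℓ _ => (hkey ℓ).1).const_mul _
  have hM_eq : ∫ q, M q ∂P = ∫ q, F 0 q ∂P := by
    rw [hMrepr, integral_const_mul, integral_finset_sum _ fun ℓ _ => (hkey ℓ).1]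
    simp only [fun ℓ => (hkey ℓ).2]
    rw [Finset.sum_const, Finset.card_univ, Fintype.card_fin, nsmul_eq_mul]
    push_cast
    field_simp
  -- G = mix * log π
  set G : ((Fin (L + 1) → Ξ) × A) → ℝ :=
    fun q => mixDensity f q.1 q.2 * Real.log (π q.2) with hGdef
  have hG_meas : Measurable G :=
    hmix_meas.mul (Real.measurable_log.comp (hπ_meas.comp measurable_snd))
  have hG_int : Integrable G P := by
    refine ⟨hG_meas.aestronglyMeasurable, ?_⟩
    rw [hasFiniteIntegral_iff_norm]
    have hnorm : ∀ q : (Fin (L + 1) → Ξ) × A, ENNReal.ofReal ‖G q‖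
        = ENNReal.ofReal (mixDensity f q.1 q.2) * ENNReal.ofReal |Real.log (π q.2)| := by
      intro q
      rw [Real.norm_eq_abs, hGdef]
      show ENNReal.ofReal |mixDensity f q.1 q.2 * Real.log (π q.2)| = _
      rw [abs_mul, abs_of_nonneg (hmix_nonneg _ _), ENNReal.ofReal_mul (hmix_nonneg _ _)]
    simp only [hnorm]
    have hGmeas2 : Measurable (fun q : (Fin (L + 1) → Ξ) × A =>
        ENNReal.ofReal (mixDensity f q.1 q.2) * ENNReal.ofReal |Real.log (π q.2)|) := by
      exact (ENNReal.measurable_ofReal.comp hmix_meas).mul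
        (ENNReal.measurable_ofReal.comp ((measurable_abs.comp
          (Real.measurable_log.comp hπ_meas)).comp measurable_snd))
    rw [lintegral_prod_symm _ hGmeas2.aemeasurable]
    have hinner : ∀ᵐ a ∂ν, ∫⁻ ξs, ENNReal.ofReal (mixDensity f ξs a)
        * ENNReal.ofReal |Real.log (π a)| ∂Pm
        = ENNReal.ofReal (π a * |Real.log (π a)|) := by
      filter_upwards [hfin] with a ha
      have hm1 : Measurable (fun ξs : Fin (L + 1) → Ξ =>
          ENNReal.ofReal (mixDensity f ξs a)) :=
        ENNReal.measurable_ofReal.comp (hmixa_meas a)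
      rw [lintegral_mul_const _ hm1,
        hmix_lint a, ENNReal.ofReal_mul (hπ_nonneg a), hπ_repr a,
        ENNReal.ofReal_toReal ha.ne]
    rw [lintegral_congr_ae hinner, ← ofReal_integral_eq_lintegral_ofReal hπ_int
      (ae_of_all _ fun a => mul_nonneg (hπ_nonneg a) (abs_nonneg _))]
    exact ENNReal.ofReal_lt_top
  have hG_eq : ∫ q, G q ∂P = ∫ a, π a * Real.log (π a) ∂ν := by
    rw [integral_prod_symm _ hG_int]
    refine integral_congr_ae (ae_of_all _ fun a => ?_)
    show ∫ ξs, mixDensity f ξs a * Real.log (π a) ∂Pm = π a * Real.log (π a)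
    rw [integral_mul_const, hmix_marg a]
  -- mix is a probability density on the product space
  have hmix_int : Integrable (fun q : (Fin (L + 1) → Ξ) × A => mixDensity f q.1 q.2) P := by
    refine ⟨hmix_meas.aestronglyMeasurable, ?_⟩
    rw [hasFiniteIntegral_iff_ofReal (ae_of_all _ fun q => hmix_nonneg _ _)]
    have hm0 : Measurable (fun q : (Fin (L + 1) → Ξ) × A =>
        ENNReal.ofReal (mixDensity f q.1 q.2)) :=
      ENNReal.measurable_ofReal.comp hmix_meas
    rw [lintegral_prod _ hm0.aemeasurable]
    have hinner : ∀ᵐ ξs ∂Pm, ∫⁻ a, ENNReal.ofReal (mixDensity f ξs a) ∂ν = 1 := by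
      filter_upwards [hmix_dens] with ξs hξs
      rw [← ofReal_integral_eq_lintegral_ofReal hξs.1
        (ae_of_all _ fun a => hmix_nonneg ξs a), hξs.2]
      simp
    rw [lintegral_congr_ae hinner]
    simp
  have hmix_total : ∫ q, mixDensity f q.1 q.2 ∂P = 1 := by
    rw [integral_prod _ hmix_int]
    have : ∀ᵐ ξs ∂Pm, ∫ a, mixDensity f ξs a ∂ν = 1 := by
      filter_upwards [hmix_dens] with ξs hξs using hξs.2
    rw [integral_congr_ae this]
    simp
  -- π ∘ snd on the product space
  have hπsnd_int : Integrable (fun q : (Fin (L + 1) → Ξ) × A => π q.2) P := by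
    refine ⟨(hπ_meas.comp measurable_snd).aestronglyMeasurable, ?_⟩
    rw [hasFiniteIntegral_iff_ofReal (ae_of_all _ fun q => hπ_nonneg _)]
    have hm : Measurable (fun q : (Fin (L + 1) → Ξ) × A => ENNReal.ofReal (π q.2)) :=
      ENNReal.measurable_ofReal.comp (hπ_meas.comp measurable_snd)
    rw [lintegral_prod _ hm.aemeasurable]
    simp only [hπ_lint]
    simp
  have hπsnd_total : ∫ q : (Fin (L + 1) → Ξ) × A, π q.2 ∂P = 1 := by
    rw [integral_prod _ hπsnd_int]
    simp only [hπ_total]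
    simp
  -- the bad set is null
  have hsec : ∀ᵐ a ∂ν, π a = 0 → (∀ᵐ ξs ∂Pm, mixDensity f ξs a = 0) := by
    filter_upwards [hfin] with a ha hπ0
    have h0 : ∫⁻ ξ, ENNReal.ofReal (f ξ a) ∂μ = 0 := by
      have := hπ_repr a
      rw [hπ0] at this
      exact (ENNReal.toReal_eq_zero_iff _).mp this.symm |>.resolve_right ha.ne
    have hf0 : ∀ᵐ ξ ∂μ, f ξ a = 0 := by
      have := (lintegral_eq_zero_iff (ENNReal.measurable_ofReal.comp (hfa_meas a))).mp h0
      filter_upwards [this] with ξ hξ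
      have : ENNReal.ofReal (f ξ a) = 0 := hξ
      rw [ENNReal.ofReal_eq_zero] at this
      exact le_antisymm this (hf_nonneg ξ a)
    have hall : ∀ᵐ ξs ∂Pm, ∀ ℓ : Fin (L + 1), f (ξs ℓ) a = 0 := by
      rw [ae_all_iff]
      intro ℓ
      exact ae_of_ae_map (hev ℓ).measurable.aemeasurable (by rw [(hev ℓ).map_eq]; exact hf0)
    filter_upwards [hall] with ξs hξs
    unfold mixDensity
    simp [hξs]
  have hN_meas : MeasurableSet {q : (Fin (L + 1) → Ξ) × A |
      π q.2 = 0 ∧ mixDensity f q.1 q.2 ≠ 0} := by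
    have h1 : MeasurableSet {q : (Fin (L + 1) → Ξ) × A | π q.2 = 0} :=
      (hπ_meas.comp measurable_snd) (measurableSet_singleton 0)
    have h2 : MeasurableSet {q : (Fin (L + 1) → Ξ) × A | mixDensity f q.1 q.2 ≠ 0} :=
      (hmix_meas (measurableSet_singleton 0)).compl
    exact h1.inter h2
  have hN : P {q : (Fin (L + 1) → Ξ) × A | π q.2 = 0 ∧ mixDensity f q.1 q.2 ≠ 0} = 0 := by
    rw [hPdef, Measure.prod_apply_symm hN_meas]
    have : ∀ᵐ a ∂ν, Pm ((fun ξs : Fin (L + 1) → Ξ => (ξs, a)) ⁻¹'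
        {q : (Fin (L + 1) → Ξ) × A | π q.2 = 0 ∧ mixDensity f q.1 q.2 ≠ 0}) = 0 := by
      filter_upwards [hsec] with a ha
      by_cases hπ0 : π a = 0
      · have hnull : Pm {ξs : Fin (L + 1) → Ξ | mixDensity f ξs a ≠ 0} = 0 := ha hπ0
        refine measure_mono_null ?_ hnull
        intro ξs hξs
        exact hξs.2
      · have : ((fun ξs : Fin (L + 1) → Ξ => (ξs, a)) ⁻¹'
            {q : (Fin (L + 1) → Ξ) × A | π q.2 = 0 ∧ mixDensity f q.1 q.2 ≠ 0}) = ∅ := by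
          ext ξs
          simp [hπ0]
        rw [this]
        simp
    rw [lintegral_congr_ae this]
    simp
  have hae_notN : ∀ᵐ q ∂P, ¬(π q.2 = 0 ∧ mixDensity f q.1 q.2 ≠ 0) := by
    rw [ae_iff]
    simpa [not_not] using hN
  -- the KL integrand
  set K : ((Fin (L + 1) → Ξ) × A) → ℝ :=
    fun q => mixDensity f q.1 q.2 * Real.log (mixDensity f q.1 q.2 / π q.2) with hKdef
  have hK_meas : Measurable K :=
    hmix_meas.mul (Real.measurable_log.comp (hmix_meas.div (hπ_meas.comp measurable_snd)))
  have hK_int : Integrable K P := by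
    refine (hKL_int L).mono hK_meas.aestronglyMeasurable (ae_of_all _ fun q => ?_)
    rw [Real.norm_eq_abs, Real.norm_eq_abs, abs_mul, abs_mul,
      abs_of_nonneg (hmix_nonneg _ _), abs_abs]
  have hKMG : ∀ᵐ q ∂P, K q = M q - G q := by
    filter_upwards [hae_notN] with q hq
    by_cases hm : mixDensity f q.1 q.2 = 0
    · simp [hKdef, hMdef, hGdef, hm]
    · have hπ0 : π q.2 ≠ 0 := fun h => hq ⟨h, hm⟩
      simp only [hKdef, hMdef, hGdef]
      rw [Real.log_div hm hπ0]
      ring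
  have hK_eq : ∫ q, K q ∂P = ∫ q, M q ∂P - ∫ q, G q ∂P := by
    rw [integral_congr_ae hKMG, integral_sub hM_int hG_int]
  -- Gibbs: the KL integral is nonnegative
  have hKlb : ∀ᵐ q ∂P, mixDensity f q.1 q.2 - π q.2 ≤ K q := by
    filter_upwards [hae_notN] with q hq
    by_cases hm : mixDensity f q.1 q.2 = 0
    · simp only [hKdef, hm, zero_mul, zero_sub]
      linarith [hπ_nonneg q.2]
    · have hπ0 : π q.2 ≠ 0 := fun h => hq ⟨h, hm⟩
      have hmp : 0 < mixDensity f q.1 q.2 := lt_of_le_of_ne (hmix_nonneg _ _) (Ne.symm hm)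
      have hπp : 0 < π q.2 := lt_of_le_of_ne (hπ_nonneg _) (Ne.symm hπ0)
      have hlog : Real.log (π q.2) - Real.log (mixDensity f q.1 q.2)
          ≤ π q.2 / mixDensity f q.1 q.2 - 1 := by
        rw [← Real.log_div hπ0 hm]
        exact Real.log_le_sub_one_of_pos (div_pos hπp hmp)
      have hfield : mixDensity f q.1 q.2 * (π q.2 / mixDensity f q.1 q.2) = π q.2 := by
        field_simp
      simp only [hKdef]
      rw [Real.log_div hm hπ0]
      nlinarith [hlog, hmp]
  have hK_nonneg : 0 ≤ ∫ q, K q ∂P := by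
    have hmono := integral_mono_ae (hmix_int.sub hπsnd_int) hK_int hKlb
    simp only [Pi.sub_apply] at hmono
    rw [integral_sub hmix_int hπsnd_int, hmix_total, hπsnd_total] at hmono
    simpa using hmono
  -- put everything together
  have hH : semiImplicitH μ ν f L = ∫ q, F 0 q ∂P := by
    rw [semiImplicitH, ← hPmdef]
    exact (integral_prod _ hF0_int).symm
  have hKit : (∫ ξs : Fin (L + 1) → Ξ,
      (∫ a, mixDensity f ξs a * Real.log (mixDensity f ξs a / π a) ∂ν) ∂Pm)
      = ∫ q, K q ∂P :=
    (integral_prod _ hK_int).symm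
  have hgap : semiImplicitH μ ν f L - (∫ a, π a * Real.log (π a) ∂ν) = ∫ q, K q ∂P := by
    rw [hH, hK_eq, hM_eq, hG_eq]
  exact ⟨by rw [hgap, hKit], by linarith [hgap ▸ hK_nonneg]⟩
end

section
/- Exchangeability step for H_{L+1}: for every integer L ≥ 0, H_{L+1} = E_{ξ_0,…,ξ_{L+1} iid ∼ μ} [ ∫ π̄_{ξ_{0:L}}(a) · log π̄_{ξ_{0:L+1}}(a) dν(a) ]; that is, in the defining expectation of H_{L+1} the action may equivalently be sampled from the mixture of the first L+1 components π̄_{ξ_{0:L}} instead of the single component f(ξ_0, ·). -/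
open MeasureTheory Filter

section aux

variable {Ξ A : Type*} [MeasurableSpace Ξ] [MeasurableSpace A]

set_option linter.unusedSectionVars false

lemma mixDensity_measurable {L : ℕ} {f : Ξ → A → ℝ} (hf : Measurable (Function.uncurry f)) :
    Measurable (fun q : (Fin (L + 1) → Ξ) × A => mixDensity f q.1 q.2) := by
  simp only [mixDensity]
  apply Measurable.const_mul
  refine Finset.measurable_sum _ fun ℓ _ => ?_
  have h : Measurable fun q : (Fin (L + 1) → Ξ) × A => (q.1 ℓ, q.2) :=
    ((measurable_pi_apply ℓ).comp measurable_fst).prodMk measurable_snd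
  exact hf.comp h

lemma mixDensity_perm {L : ℕ} (f : Ξ → A → ℝ) (σ : Equiv.Perm (Fin (L + 1)))
    (ξs : Fin (L + 1) → Ξ) (a : A) :
    mixDensity f (fun i => ξs (σ i)) a = mixDensity f ξs a := by
  simp only [mixDensity]
  congr 1
  exact Equiv.sum_comp σ (fun i => f (ξs i) a)

end aux

/-- exchangeability step for `H_{L+1}`.  In the defining
expectation of `H_{L+1}`, the action may equivalently be sampled from the
mixture of the first `L+1` components `π̄_{ξ_{0:L}}` instead of the single
component `f (ξ_0, ·)`. -/
theorem semiImplicitH_succ_eq_partial_mixture_form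
    {Ξ A : Type*} [MeasurableSpace Ξ] [MeasurableSpace A]
    (μ : Measure Ξ) [IsProbabilityMeasure μ]
    (ν : Measure A) [SigmaFinite ν]
    (f : Ξ → A → ℝ)
    (hf_nonneg : ∀ ξ a, 0 ≤ f ξ a)
    (hf_meas : Measurable (Function.uncurry f))
    (hf_dens : ∀ᵐ ξ ∂μ, ∫ a, f ξ a ∂ν = 1)
    (hH_int : ∀ L : ℕ, Integrable
      (fun q : (Fin (L + 1) → Ξ) × A =>
        f (q.1 0) q.2 * |Real.log (mixDensity f q.1 q.2)|)
      ((Measure.pi fun _ => μ).prod ν))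
    (hmix_int : ∀ L : ℕ, Integrable
      (fun q : (Fin (L + 2) → Ξ) × A =>
        mixDensity f (fun ℓ : Fin (L + 1) => q.1 ℓ.castSucc) q.2 *
          |Real.log (mixDensity f q.1 q.2)|)
      ((Measure.pi fun _ => μ).prod ν)) :
    ∀ L : ℕ,
      semiImplicitH μ ν f (L + 1) =
        ∫ ξs : Fin (L + 2) → Ξ,
          (∫ a, mixDensity f (fun ℓ : Fin (L + 1) => ξs ℓ.castSucc) a *
            Real.log (mixDensity f ξs a) ∂ν)
          ∂(Measure.pi fun _ => μ) := by
  intro L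
  set P : Measure (Fin (L + 2) → Ξ) := Measure.pi fun _ => μ with hP
  set M : Measure ((Fin (L + 2) → Ξ) × A) := P.prod ν with hM
  -- measurability facts
  have hmixmeas : Measurable (fun q : (Fin (L + 2) → Ξ) × A => mixDensity f q.1 q.2) :=
    mixDensity_measurable hf_meas
  have hlogmeas : Measurable (fun q : (Fin (L + 2) → Ξ) × A =>
      Real.log (mixDensity f q.1 q.2)) := Real.measurable_log.comp hmixmeas
  have hterm_meas : ∀ j : Fin (L + 2), Measurable
      (fun q : (Fin (L + 2) → Ξ) × A =>
        f (q.1 j) q.2 * Real.log (mixDensity f q.1 q.2)) := by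
    intro j
    have h : Measurable fun q : (Fin (L + 2) → Ξ) × A => (q.1 j, q.2) :=
      ((measurable_pi_apply j).comp measurable_fst).prodMk measurable_snd
    have h2 : Measurable fun q : (Fin (L + 2) → Ξ) × A => f (q.1 j) q.2 := hf_meas.comp h
    exact h2.mul hlogmeas
  have hmixcast_meas : Measurable (fun q : (Fin (L + 2) → Ξ) × A =>
      mixDensity f (fun ℓ : Fin (L + 1) => q.1 ℓ.castSucc) q.2) := by
    have : (fun q : (Fin (L + 2) → Ξ) × A =>
        mixDensity f (fun ℓ : Fin (L + 1) => q.1 ℓ.castSucc) q.2) =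
        (fun q : (Fin (L + 1) → Ξ) × A => mixDensity f q.1 q.2) ∘
          (fun q => ((fun ℓ : Fin (L + 1) => q.1 ℓ.castSucc), q.2)) := rfl
    rw [this]
    exact (mixDensity_measurable hf_meas).comp
      ((measurable_pi_lambda _ fun ℓ =>
        (measurable_pi_apply ℓ.castSucc).comp measurable_fst).prodMk measurable_snd)
  -- integrability of the j = 0 term
  have hint0 : Integrable (fun q : (Fin (L + 2) → Ξ) × A =>
      f (q.1 0) q.2 * Real.log (mixDensity f q.1 q.2)) M := by
    refine (integrable_norm_iff (hterm_meas 0).aestronglyMeasurable).mp ?_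
    have : (fun q : (Fin (L + 2) → Ξ) × A =>
        ‖f (q.1 0) q.2 * Real.log (mixDensity f q.1 q.2)‖) =
        fun q => f (q.1 0) q.2 * |Real.log (mixDensity f q.1 q.2)| := by
      funext q
      rw [Real.norm_eq_abs, abs_mul, abs_of_nonneg (hf_nonneg _ _)]
    rw [this]
    exact hH_int (L + 1)
  -- the permutation step
  have key : ∀ j : Fin (L + 2),
      (∫ q, f (q.1 j) q.2 * Real.log (mixDensity f q.1 q.2) ∂M
        = ∫ q, f (q.1 0) q.2 * Real.log (mixDensity f q.1 q.2) ∂M) ∧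
      Integrable (fun q : (Fin (L + 2) → Ξ) × A =>
        f (q.1 j) q.2 * Real.log (mixDensity f q.1 q.2)) M := by
    intro j
    set σ : Equiv.Perm (Fin (L + 2)) := Equiv.swap 0 j with hσ
    set e : ((Fin (L + 2)) → Ξ) ≃ᵐ ((Fin (L + 2)) → Ξ) :=
      MeasurableEquiv.piCongrLeft (fun _ => Ξ) σ with he
    have he_apply : ∀ (g : Fin (L + 2) → Ξ) (i : Fin (L + 2)), e g i = g (σ i) := by
      intro g i
      have h1 : e g (σ (σ.symm i)) = g (σ.symm i) :=
        MeasurableEquiv.piCongrLeft_apply_apply (β := fun _ : Fin (L + 2) => Ξ) σ g (σ.symm i)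
      rw [Equiv.apply_symm_apply] at h1
      rw [h1, hσ, Equiv.symm_swap]
    have hp : MeasurePreserving e P P := measurePreserving_piCongrLeft (fun _ => μ) σ
    set E : ((Fin (L + 2) → Ξ) × A) ≃ᵐ ((Fin (L + 2) → Ξ) × A) :=
      e.prodCongr (MeasurableEquiv.refl A) with hE
    have hpp : MeasurePreserving E M M := by
      have := hp.prod (MeasurePreserving.id ν)
      exact ⟨E.measurable, this.map_eq⟩
    have hcomp : ∀ q : (Fin (L + 2) → Ξ) × A,
        f ((E q).1 0) (E q).2 * Real.log (mixDensity f (E q).1 (E q).2) =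
        f (q.1 j) q.2 * Real.log (mixDensity f q.1 q.2) := by
      intro q
      have h1 : (E q).1 = fun i => q.1 (σ i) := funext fun i => he_apply q.1 i
      have h2 : (E q).2 = q.2 := rfl
      rw [h1, h2, mixDensity_perm]
      simp only [hσ, Equiv.swap_apply_left]
    constructor
    · rw [← hpp.integral_comp'
        (fun q => f (q.1 0) q.2 * Real.log (mixDensity f q.1 q.2))]
      exact integral_congr_ae (Filter.Eventually.of_forall fun q => (hcomp q).symm)
    · have := (hpp.integrable_comp_emb E.measurableEmbedding
        (g := fun q => f (q.1 0) q.2 * Real.log (mixDensity f q.1 q.2))).mpr hint0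
      exact this.congr (Filter.Eventually.of_forall fun q => hcomp q)
  -- integrability of the mixture term
  have hmixint : Integrable (fun q : (Fin (L + 2) → Ξ) × A =>
      mixDensity f (fun ℓ : Fin (L + 1) => q.1 ℓ.castSucc) q.2 *
        Real.log (mixDensity f q.1 q.2)) M := by
    refine (integrable_norm_iff (hmixcast_meas.mul hlogmeas).aestronglyMeasurable).mp ?_
    have hmix_nonneg : ∀ (ξs : Fin (L + 1) → Ξ) (a : A), 0 ≤ mixDensity f ξs a := by
      intro ξs a
      exact mul_nonneg (by positivity) (Finset.sum_nonneg fun ℓ _ => hf_nonneg _ _)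
    have : (fun q : (Fin (L + 2) → Ξ) × A =>
        ‖mixDensity f (fun ℓ : Fin (L + 1) => q.1 ℓ.castSucc) q.2 *
          Real.log (mixDensity f q.1 q.2)‖) =
        fun q => mixDensity f (fun ℓ : Fin (L + 1) => q.1 ℓ.castSucc) q.2 *
          |Real.log (mixDensity f q.1 q.2)| := by
      funext q
      rw [Real.norm_eq_abs, abs_mul, abs_of_nonneg (hmix_nonneg _ _)]
    simp only [Pi.mul_apply]
    rw [this]
    exact hmix_int L
  -- compute both sides as product integrals
  have hLHS : semiImplicitH μ ν f (L + 1) =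
      ∫ q, f (q.1 0) q.2 * Real.log (mixDensity f q.1 q.2) ∂M := by
    rw [semiImplicitH, hM, hP]
    exact integral_integral hint0
  have hRHS : (∫ ξs : Fin (L + 2) → Ξ,
      (∫ a, mixDensity f (fun ℓ : Fin (L + 1) => ξs ℓ.castSucc) a *
        Real.log (mixDensity f ξs a) ∂ν) ∂(Measure.pi fun _ => μ)) =
      ∫ q, mixDensity f (fun ℓ : Fin (L + 1) => q.1 ℓ.castSucc) q.2 *
        Real.log (mixDensity f q.1 q.2) ∂M := by
    rw [hM, hP]
    exact integral_integral hmixint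
  rw [hLHS, hRHS]
  -- expand the mixture
  have hexpand : ∀ q : (Fin (L + 2) → Ξ) × A,
      mixDensity f (fun ℓ : Fin (L + 1) => q.1 ℓ.castSucc) q.2 *
        Real.log (mixDensity f q.1 q.2) =
      (1 / (L + 1 : ℝ)) * ∑ ℓ : Fin (L + 1),
        (f (q.1 ℓ.castSucc) q.2 * Real.log (mixDensity f q.1 q.2)) := by
    intro q
    simp only [mixDensity]
    rw [mul_assoc, Finset.sum_mul]
  calc ∫ q, f (q.1 0) q.2 * Real.log (mixDensity f q.1 q.2) ∂M
      = (1 / (L + 1 : ℝ)) * ∑ ℓ : Fin (L + 1),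
        ∫ q, f (q.1 ℓ.castSucc) q.2 * Real.log (mixDensity f q.1 q.2) ∂M := by
        rw [Finset.sum_congr rfl (fun ℓ _ => (key ℓ.castSucc).1), Finset.sum_const,
          Finset.card_univ, Fintype.card_fin, nsmul_eq_mul]
        push_cast
        rw [one_div, ← mul_assoc, inv_mul_cancel₀ (by positivity : ((L : ℝ) + 1) ≠ 0),
          one_mul]
    _ = ∫ q, (1 / (L + 1 : ℝ)) * ∑ ℓ : Fin (L + 1),
        (f (q.1 ℓ.castSucc) q.2 * Real.log (mixDensity f q.1 q.2)) ∂M := by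
        rw [← integral_finset_sum _ (fun ℓ _ => (key ℓ.castSucc).2), ← integral_const_mul]
    _ = ∫ q, mixDensity f (fun ℓ : Fin (L + 1) => q.1 ℓ.castSucc) q.2 *
        Real.log (mixDensity f q.1 q.2) ∂M := by
        exact integral_congr_ae (Filter.Eventually.of_forall fun q => (hexpand q).symm)
end

section
/- Semi-implicit upper bound on the regularized policy objective: for every integer L ≥ 0, every α > 0, and every bounded measurable function Q : A → ℝ, one has −∫ π(a) ( Q(a) − α log π(a) ) dν(a) ≤ E_{ξ_0,…,ξ_L iid ∼ μ} [ ∫ f(ξ_0, a) ( −Q(a) + α log π̄_{ξ_{0:L}}(a) ) dν(a) ]; i.e., replacing the intractable marginal log-density log π(a) by the L-sample mixture estimator log π̄_{ξ_{0:L}}(a) yields an upper bound on the entropy-regularized objective J. -/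
open MeasureTheory Filter

/-- semi-implicit upper bound on the regularized policy objective.
Replacing the intractable marginal log-density `log π(a)` by the `L`-sample
mixture estimator `log π̄_{ξ_{0:L}}(a)` yields an upper bound on the
entropy-regularized objective `J = −∫ π (Q − α log π) dν`. -/
theorem semiImplicit_upper_bound_on_regularized_objective
    {Ξ A : Type*} [MeasurableSpace Ξ] [MeasurableSpace A]
    (μ : Measure Ξ) [IsProbabilityMeasure μ]
    (ν : Measure A) [SigmaFinite ν]
    (f : Ξ → A → ℝ)
    (hf_nonneg : ∀ ξ a, 0 ≤ f ξ a)
    (hf_meas : Measurable (Function.uncurry f))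
    (hf_dens : ∀ᵐ ξ ∂μ, ∫ a, f ξ a ∂ν = 1)
    (π : A → ℝ) (hπ : ∀ a, π a = ∫ ξ, f ξ a ∂μ)
    (hπ_int : Integrable (fun a => π a * |Real.log (π a)|) ν)
    (hH_int : ∀ L : ℕ, Integrable
      (fun q : (Fin (L + 1) → Ξ) × A =>
        f (q.1 0) q.2 * |Real.log (mixDensity f q.1 q.2)|)
      ((Measure.pi fun _ => μ).prod ν)) :
    ∀ L : ℕ, ∀ α : ℝ, 0 < α → ∀ Q : A → ℝ, Measurable Q → (∃ C : ℝ, ∀ a, |Q a| ≤ C) →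
      -(∫ a, π a * (Q a - α * Real.log (π a)) ∂ν) ≤
        ∫ ξs : Fin (L + 1) → Ξ,
          (∫ a, f (ξs 0) a * (-(Q a) + α * Real.log (mixDensity f ξs a)) ∂ν)
          ∂(Measure.pi fun _ => μ) := by
  intro L α hα Q hQ hQbd
  obtain ⟨C, hC⟩ := hQbd
  set P : Measure (Fin (L + 1) → Ξ) := Measure.pi fun _ => μ with hP
  haveI : IsProbabilityMeasure P := by rw [hP]; infer_instance
  haveI : NeZero P := ⟨IsProbabilityMeasure.ne_zero P⟩
  -- basic measurability
  have hfa_meas : ∀ a : A, Measurable fun ξ => f ξ a := fun a =>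
    hf_meas.comp (measurable_id.prodMk measurable_const)
  have hfl_meas : ∀ ℓ : Fin (L + 1),
      Measurable fun q : (Fin (L + 1) → Ξ) × A => f (q.1 ℓ) q.2 := by
    intro ℓ
    have h : Measurable fun q : (Fin (L + 1) → Ξ) × A => ((q.1 ℓ, q.2) : Ξ × A) :=
      ((measurable_pi_apply ℓ).comp measurable_fst).prodMk measurable_snd
    exact hf_meas.comp h
  have hm_meas : Measurable fun q : (Fin (L + 1) → Ξ) × A => mixDensity f q.1 q.2 := by
    unfold mixDensity
    exact measurable_const.mul (Finset.measurable_sum _ fun ℓ _ => hfl_meas ℓ)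
  have hπ_sm : StronglyMeasurable π := by
    have h := hf_meas.stronglyMeasurable.integral_prod_left' (μ := μ)
    have : π = fun a => ∫ ξ, Function.uncurry f (ξ, a) ∂μ := by
      funext a; exact hπ a
    rw [this]; exact h
  have hπ_nonneg : ∀ a, 0 ≤ π a := fun a => by
    rw [hπ]; exact integral_nonneg fun ξ => hf_nonneg ξ a
  have hm_nonneg : ∀ (ξs : Fin (L + 1) → Ξ) (a : A), 0 ≤ mixDensity f ξs a := by
    intro ξs a
    unfold mixDensity
    have h1 : (0:ℝ) ≤ 1 / (L + 1 : ℝ) := by positivity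
    exact mul_nonneg h1 (Finset.sum_nonneg fun ℓ _ => hf_nonneg _ _)
  -- density facts
  have hf_int_slice : ∀ᵐ ξ ∂μ, Integrable (fun a => f ξ a) ν := by
    filter_upwards [hf_dens] with ξ hξ
    by_contra h
    rw [integral_undef h] at hξ; norm_num at hξ
  have hf_lint : ∀ᵐ ξ ∂μ, ∫⁻ a, ENNReal.ofReal (f ξ a) ∂ν = 1 := by
    filter_upwards [hf_dens, hf_int_slice] with ξ h1 h2
    rw [← ofReal_integral_eq_lintegral_ofReal h2
      (Eventually.of_forall fun a => hf_nonneg ξ a), h1, ENNReal.ofReal_one]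
  have huf_int : Integrable (Function.uncurry f) (μ.prod ν) := by
    refine ⟨hf_meas.aestronglyMeasurable, ?_⟩
    have h0 : 0 ≤ᵐ[μ.prod ν] Function.uncurry f :=
      Eventually.of_forall fun q => hf_nonneg q.1 q.2
    rw [hasFiniteIntegral_iff_ofReal h0]
    rw [lintegral_prod _ (hf_meas.ennreal_ofReal.aemeasurable)]
    have : ∫⁻ ξ, ∫⁻ a, ENNReal.ofReal (Function.uncurry f (ξ, a)) ∂ν ∂μ = ∫⁻ ξ, 1 ∂μ :=
      lintegral_congr_ae hf_lint
    rw [this, lintegral_one]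
    simp
  -- measure-preserving maps
  have hmp_eval : ∀ ℓ : Fin (L + 1),
      MeasurePreserving (fun ξs : Fin (L + 1) → Ξ => ξs ℓ) P μ := by
    intro ℓ
    refine ⟨measurable_pi_apply ℓ, ?_⟩
    ext s hs
    rw [Measure.map_apply (measurable_pi_apply ℓ) hs]
    have hpre : (fun ξs : Fin (L + 1) → Ξ => ξs ℓ) ⁻¹' s
        = Set.pi Set.univ (Function.update (fun _ => Set.univ) ℓ s) := by
      ext ξs
      simp only [Set.mem_preimage, Set.mem_univ_pi, Function.update_apply]
      constructor
      · intro h i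
        by_cases hi : i = ℓ
        · subst hi; simp [h]
        · simp [hi]
      · intro h
        have := h ℓ
        simpa using this
    rw [hpre, hP, Measure.pi_pi]
    rw [Finset.prod_eq_single ℓ (fun i _ hi => by simp [Function.update_apply, hi])
      (by simp)]
    simp
  have heval : ∀ (ℓ : Fin (L + 1)) (a : A), ∫ ξs, f (ξs ℓ) a ∂P = π a := by
    intro ℓ a
    rw [hπ]
    conv_rhs => rw [← (hmp_eval ℓ).map_eq]
    rw [integral_map (measurable_pi_apply ℓ).aemeasurable (hfa_meas a).aestronglyMeasurable]
  have hmp_perm : ∀ e : Fin (L + 1) ≃ Fin (L + 1),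
      MeasurePreserving (fun ξs : Fin (L + 1) → Ξ => ξs ∘ e) P P := by
    intro e
    have h := measurePreserving_piCongrLeft (fun _ : Fin (L + 1) => μ) e.symm
    have hco : ⇑(MeasurableEquiv.piCongrLeft (fun _ : Fin (L + 1) => Ξ) e.symm)
        = fun ξs => ξs ∘ e := by
      funext ξs
      funext i
      have h2 := Equiv.piCongrLeft_apply_apply (fun _ : Fin (L + 1) => Ξ) e.symm ξs (e i)
      rw [MeasurableEquiv.coe_piCongrLeft]
      simpa using h2
    rw [hco] at h
    exact h
  have hmp_permprod : ∀ e : Fin (L + 1) ≃ Fin (L + 1),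
      MeasurePreserving (fun q : (Fin (L + 1) → Ξ) × A => (q.1 ∘ e, q.2))
        (P.prod ν) (P.prod ν) := fun e => (hmp_perm e).prod (MeasurePreserving.id ν)
  have hmix_perm : ∀ (e : Fin (L + 1) ≃ Fin (L + 1)) (ξs : Fin (L + 1) → Ξ) (a : A),
      mixDensity f (ξs ∘ e) a = mixDensity f ξs a := by
    intro e ξs a
    unfold mixDensity
    congr 1
    exact Fintype.sum_equiv e _ _ fun ℓ => rfl
  -- transported integrabilities
  have hint_comp : ∀ (g : (Fin (L + 1) → Ξ) × A → ℝ) (e : Fin (L + 1) ≃ Fin (L + 1)),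
      Integrable g (P.prod ν) → Integrable (fun q => g (q.1 ∘ e, q.2)) (P.prod ν) :=
    fun g e hg => memLp_one_iff_integrable.mp
      ((memLp_one_iff_integrable.mpr hg).comp_measurePreserving (hmp_permprod e))
  have hfl_int : ∀ ℓ : Fin (L + 1),
      Integrable (fun q : (Fin (L + 1) → Ξ) × A => f (q.1 ℓ) q.2) (P.prod ν) := by
    intro ℓ
    have hmp : MeasurePreserving (fun q : (Fin (L + 1) → Ξ) × A => (q.1 ℓ, q.2))
        (P.prod ν) (μ.prod ν) := (hmp_eval ℓ).prod (MeasurePreserving.id ν)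
    exact memLp_one_iff_integrable.mp
      ((memLp_one_iff_integrable.mpr huf_int).comp_measurePreserving hmp)
  have hHl : ∀ ℓ : Fin (L + 1),
      Integrable (fun q : (Fin (L + 1) → Ξ) × A =>
        f (q.1 ℓ) q.2 * |Real.log (mixDensity f q.1 q.2)|) (P.prod ν) := by
    intro ℓ
    have h := hint_comp _ (Equiv.swap (0 : Fin (L + 1)) ℓ) (hH_int L)
    have heq : (fun q : (Fin (L + 1) → Ξ) × A =>
        f ((q.1 ∘ (Equiv.swap (0 : Fin (L + 1)) ℓ)) 0) q.2 *
          |Real.log (mixDensity f (q.1 ∘ (Equiv.swap (0 : Fin (L + 1)) ℓ)) q.2)|)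
        = fun q => f (q.1 ℓ) q.2 * |Real.log (mixDensity f q.1 q.2)| := by
      funext q
      rw [hmix_perm]
      simp [Equiv.swap_apply_left]
    rw [heq] at h
    exact h
  have hm_int : Integrable (fun q : (Fin (L + 1) → Ξ) × A => mixDensity f q.1 q.2)
      (P.prod ν) := by
    have : (fun q : (Fin (L + 1) → Ξ) × A => mixDensity f q.1 q.2)
        = fun q => (1 / (L + 1 : ℝ)) * ∑ ℓ, f (q.1 ℓ) q.2 := rfl
    rw [this]
    exact (integrable_finset_sum _ fun ℓ _ => hfl_int ℓ).const_mul _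
  have hfllog_int : ∀ ℓ : Fin (L + 1),
      Integrable (fun q : (Fin (L + 1) → Ξ) × A =>
        f (q.1 ℓ) q.2 * Real.log (mixDensity f q.1 q.2)) (P.prod ν) := by
    intro ℓ
    refine (hHl ℓ).mono' ((hfl_meas ℓ).mul
      (Real.measurable_log.comp hm_meas)).aestronglyMeasurable ?_
    refine Eventually.of_forall fun q => ?_
    rw [Real.norm_eq_abs, abs_mul, abs_of_nonneg (hf_nonneg _ _)]
  have hmlog_int : Integrable (fun q : (Fin (L + 1) → Ξ) × A =>
      mixDensity f q.1 q.2 * Real.log (mixDensity f q.1 q.2)) (P.prod ν) := by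
    have heq : (fun q : (Fin (L + 1) → Ξ) × A =>
        mixDensity f q.1 q.2 * Real.log (mixDensity f q.1 q.2))
        = fun q => (1 / (L + 1 : ℝ)) *
            ∑ ℓ, f (q.1 ℓ) q.2 * Real.log (mixDensity f q.1 q.2) := by
      funext q
      show mixDensity f q.1 q.2 * Real.log (mixDensity f q.1 q.2) = _
      rw [mixDensity, mul_assoc, Finset.sum_mul]
    rw [heq]
    exact (integrable_finset_sum _ fun ℓ _ => hfllog_int ℓ).const_mul _
  -- symmetry identity on the product space
  have hint_comp_eq : ∀ (g : (Fin (L + 1) → Ξ) × A → ℝ),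
      AEStronglyMeasurable g (P.prod ν) → ∀ e : Fin (L + 1) ≃ Fin (L + 1),
      ∫ q, g (q.1 ∘ e, q.2) ∂(P.prod ν) = ∫ q, g q ∂(P.prod ν) := by
    intro g hg e
    conv_rhs => rw [← (hmp_permprod e).map_eq]
    rw [integral_map (hmp_permprod e).measurable.aemeasurable
      ((hmp_permprod e).map_eq.symm ▸ hg)]
  have hsym : ∀ ℓ : Fin (L + 1),
      ∫ q, f (q.1 ℓ) q.2 * Real.log (mixDensity f q.1 q.2) ∂(P.prod ν)
        = ∫ q, f (q.1 0) q.2 * Real.log (mixDensity f q.1 q.2) ∂(P.prod ν) := by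
    intro ℓ
    have h := hint_comp_eq (fun q => f (q.1 0) q.2 * Real.log (mixDensity f q.1 q.2))
      ((hfl_meas 0).mul (Real.measurable_log.comp hm_meas)).aestronglyMeasurable
      (Equiv.swap (0 : Fin (L + 1)) ℓ)
    have heq : (fun q : (Fin (L + 1) → Ξ) × A =>
        f ((q.1 ∘ (Equiv.swap (0 : Fin (L + 1)) ℓ)) 0) q.2 *
          Real.log (mixDensity f (q.1 ∘ (Equiv.swap (0 : Fin (L + 1)) ℓ)) q.2))
        = fun q => f (q.1 ℓ) q.2 * Real.log (mixDensity f q.1 q.2) := by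
      funext q
      rw [hmix_perm]
      simp [Equiv.swap_apply_left]
    rw [heq] at h
    exact h
  have hkey_prod : ∫ q, mixDensity f q.1 q.2 * Real.log (mixDensity f q.1 q.2) ∂(P.prod ν)
      = ∫ q, f (q.1 0) q.2 * Real.log (mixDensity f q.1 q.2) ∂(P.prod ν) := by
    have heq : (fun q : (Fin (L + 1) → Ξ) × A =>
        mixDensity f q.1 q.2 * Real.log (mixDensity f q.1 q.2))
        = fun q => (1 / (L + 1 : ℝ)) *
            ∑ ℓ, f (q.1 ℓ) q.2 * Real.log (mixDensity f q.1 q.2) := by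
      funext q
      show mixDensity f q.1 q.2 * Real.log (mixDensity f q.1 q.2) = _
      rw [mixDensity, mul_assoc, Finset.sum_mul]
    rw [heq, integral_const_mul, integral_finset_sum _ fun ℓ _ => hfllog_int ℓ]
    have hsum : ∑ ℓ : Fin (L + 1),
        ∫ q, f (q.1 ℓ) q.2 * Real.log (mixDensity f q.1 q.2) ∂(P.prod ν)
        = (L + 1 : ℝ) * ∫ q, f (q.1 0) q.2 * Real.log (mixDensity f q.1 q.2) ∂(P.prod ν) := by
      rw [Finset.sum_congr rfl fun ℓ _ => hsym ℓ, Finset.sum_const, Finset.card_univ,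
        Fintype.card_fin, nsmul_eq_mul]
      push_cast
      ring
    rw [hsum]
    have hne : (L + 1 : ℝ) ≠ 0 := by positivity
    field_simp
  -- Jensen
  have hae1 : ∀ᵐ a ∂ν, Integrable (fun ξs => mixDensity f ξs a) P := hm_int.prod_left_ae
  have hae2 : ∀ᵐ a ∂ν, Integrable
      (fun ξs => mixDensity f ξs a * Real.log (mixDensity f ξs a)) P :=
    hmlog_int.prod_left_ae
  have hae3 : ∀ᵐ a ∂ν, ∀ ℓ : Fin (L + 1), Integrable (fun ξs => f (ξs ℓ) a) P :=
    ae_all_iff.mpr fun ℓ => (hfl_int ℓ).prod_left_ae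
  have hmean : ∀ᵐ a ∂ν, ∫ ξs, mixDensity f ξs a ∂P = π a := by
    filter_upwards [hae3] with a ha
    have : (fun ξs : Fin (L + 1) → Ξ => mixDensity f ξs a)
        = fun ξs => (1 / (L + 1 : ℝ)) * ∑ ℓ, f (ξs ℓ) a := rfl
    rw [this, integral_const_mul, integral_finset_sum _ fun ℓ _ => ha ℓ]
    rw [Finset.sum_congr rfl fun ℓ _ => heval ℓ a, Finset.sum_const, Finset.card_univ,
      Fintype.card_fin, nsmul_eq_mul]
    have hne : (L + 1 : ℝ) ≠ 0 := by positivity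
    push_cast
    field_simp
  have hjensen : ∀ᵐ a ∂ν, π a * Real.log (π a)
      ≤ ∫ ξs, mixDensity f ξs a * Real.log (mixDensity f ξs a) ∂P := by
    filter_upwards [hae1, hae2, hmean] with a h1 h2 hm
    have hgi : Integrable ((fun x : ℝ => x * Real.log x) ∘ fun ξs => mixDensity f ξs a) P := h2
    have h := Real.convexOn_mul_log.map_average_le Real.continuous_mul_log.continuousOn
      isClosed_Ici (Eventually.of_forall fun ξs => hm_nonneg ξs a) h1 hgi
    rw [average_eq_integral, average_eq_integral, hm] at h
    exact h
  -- integrate Jensen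
  have hπlog_int : Integrable (fun a => π a * Real.log (π a)) ν := by
    refine hπ_int.mono' (hπ_sm.measurable.mul
      (Real.measurable_log.comp hπ_sm.measurable)).aestronglyMeasurable ?_
    refine Eventually.of_forall fun a => ?_
    rw [Real.norm_eq_abs, abs_mul, abs_of_nonneg (hπ_nonneg a)]
  have hinner_int : Integrable
      (fun a => ∫ ξs, mixDensity f ξs a * Real.log (mixDensity f ξs a) ∂P) ν :=
    hmlog_int.integral_prod_right
  have hmain : ∫ a, π a * Real.log (π a) ∂ν
      ≤ ∫ q, f (q.1 0) q.2 * Real.log (mixDensity f q.1 q.2) ∂(P.prod ν) := by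
    calc ∫ a, π a * Real.log (π a) ∂ν
        ≤ ∫ a, ∫ ξs, mixDensity f ξs a * Real.log (mixDensity f ξs a) ∂P ∂ν :=
          integral_mono_ae hπlog_int hinner_int hjensen
      _ = ∫ q, mixDensity f q.1 q.2 * Real.log (mixDensity f q.1 q.2) ∂(P.prod ν) :=
          (integral_prod_symm _ hmlog_int).symm
      _ = _ := hkey_prod
  -- integrability of the Q parts
  have hπQ_int : Integrable (fun a => π a * Q a) ν := by
    have hπ_int' : Integrable π ν := by
      refine ⟨hπ_sm.aestronglyMeasurable, ?_⟩
      rw [hasFiniteIntegral_iff_ofReal (Eventually.of_forall hπ_nonneg)]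
      have hπ_ofReal : ∀ᵐ a ∂ν, ENNReal.ofReal (π a)
          = ∫⁻ ξ, ENNReal.ofReal (f ξ a) ∂μ := by
        filter_upwards [huf_int.prod_left_ae] with a ha
        have ha' : Integrable (fun ξ => f ξ a) μ := ha
        rw [hπ, ofReal_integral_eq_lintegral_ofReal ha'
          (Eventually.of_forall fun ξ => hf_nonneg ξ a)]
      have hmsw : Measurable fun p : A × Ξ => ENNReal.ofReal (f p.2 p.1) :=
        (hf_meas.comp measurable_swap).ennreal_ofReal
      have hswap := lintegral_lintegral_swap (μ := ν) (ν := μ)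
        (f := fun a ξ => ENNReal.ofReal (f ξ a)) hmsw.aemeasurable
      rw [lintegral_congr_ae hπ_ofReal, hswap]
      have : ∫⁻ ξ, ∫⁻ a, ENNReal.ofReal (f ξ a) ∂ν ∂μ = ∫⁻ ξ, 1 ∂μ :=
        lintegral_congr_ae hf_lint
      rw [this, lintegral_one]
      simp
    refine (hπ_int'.const_mul C).mono'
      (hπ_sm.measurable.mul hQ).aestronglyMeasurable ?_
    refine Eventually.of_forall fun a => ?_
    rw [Real.norm_eq_abs, abs_mul, abs_of_nonneg (hπ_nonneg a)]
    calc π a * |Q a| ≤ π a * C := mul_le_mul_of_nonneg_left (hC a) (hπ_nonneg a)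
      _ = C * π a := mul_comm _ _
  have hfQ_int : Integrable
      (fun q : (Fin (L + 1) → Ξ) × A => f (q.1 0) q.2 * (-(Q q.2))) (P.prod ν) := by
    refine ((hfl_int 0).const_mul C).mono'
      ((hfl_meas 0).mul (hQ.comp measurable_snd).neg).aestronglyMeasurable ?_
    refine Eventually.of_forall fun q => ?_
    rw [Real.norm_eq_abs, abs_mul, abs_of_nonneg (hf_nonneg _ _), abs_neg]
    calc f (q.1 0) q.2 * |Q q.2| ≤ f (q.1 0) q.2 * C :=
          mul_le_mul_of_nonneg_left (hC q.2) (hf_nonneg _ _)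
      _ = C * f (q.1 0) q.2 := mul_comm _ _
  have hGsplit : (fun q : (Fin (L + 1) → Ξ) × A =>
      f (q.1 0) q.2 * (-(Q q.2) + α * Real.log (mixDensity f q.1 q.2)))
      = fun q => f (q.1 0) q.2 * (-(Q q.2))
          + α * (f (q.1 0) q.2 * Real.log (mixDensity f q.1 q.2)) := by
    funext q; ring
  have hG_int : Integrable (fun q : (Fin (L + 1) → Ξ) × A =>
      f (q.1 0) q.2 * (-(Q q.2) + α * Real.log (mixDensity f q.1 q.2))) (P.prod ν) := by
    rw [hGsplit]
    exact hfQ_int.add ((hfllog_int 0).const_mul α)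
  have hQpart : ∫ q, f (q.1 0) q.2 * (-(Q q.2)) ∂(P.prod ν)
      = ∫ a, π a * (-(Q a)) ∂ν := by
    rw [integral_prod_symm _ hfQ_int]
    refine integral_congr_ae (Eventually.of_forall fun a => ?_)
    show (∫ ξs, f (ξs 0) a * (-(Q a)) ∂P) = π a * (-(Q a))
    rw [integral_mul_const, heval 0 a]
  -- final assembly
  have hLHS : -(∫ a, π a * (Q a - α * Real.log (π a)) ∂ν)
      = ∫ a, π a * (-(Q a)) ∂ν + α * ∫ a, π a * Real.log (π a) ∂ν := by
    have h1 : (fun a => π a * (Q a - α * Real.log (π a)))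
        = fun a => π a * Q a - α * (π a * Real.log (π a)) := by funext a; ring
    have h2 : (fun a => π a * (-(Q a))) = fun a => -(π a * Q a) := by funext a; ring
    rw [h1, integral_sub hπQ_int (hπlog_int.const_mul α), integral_const_mul, h2,
      integral_neg]
    ring
  have hRHS : ∫ ξs, (∫ a, f (ξs 0) a * (-(Q a) + α * Real.log (mixDensity f ξs a)) ∂ν) ∂P
      = ∫ a, π a * (-(Q a)) ∂ν
        + α * ∫ q, f (q.1 0) q.2 * Real.log (mixDensity f q.1 q.2) ∂(P.prod ν) := by
    rw [← integral_prod _ hG_int, hGsplit, integral_add hfQ_int ((hfllog_int 0).const_mul α),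
      integral_const_mul, hQpart]
  rw [hLHS, hRHS]
  exact add_le_add_right (mul_le_mul_of_nonneg_left hmain hα.le) _
end
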